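/- For any twice continuously differentiable function f : ℝ₊ → ℝ and any reference point S₀ > 0 and any S_T > 0, one has f(S_T) = f(S₀) + f'(S₀)(S_T − S₀) + ∫₀^{S₀} f''(K)(K − S_T)⁺ dK + ∫_{S₀}^∞ f''(K)(S_T − K)⁺ dK (the Carr–Madan static replication identity). -/
import Mathlib


open MeasureTheory intervalIntegral Set

lemma carr_madan_ibp (f : ℝ → ℝ) (hf : ContDiffOn ℝ 2 f (Set.Ioi 0))
    (a b c : ℝ) (ha : 0 < a) (hb : 0 < b) :
    ∫ x in a..b, (x - c) * deriv (deriv f) x =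
      deriv f b * (b - c) - deriv f a * (a - c) - (f b - f a) := by
  have hsub : uIcc a b ⊆ Ioi 0 := fun x hx => lt_of_lt_of_le (lt_min ha hb) hx.1
  have hf1 : ContDiffOn ℝ 1 (deriv f) (Ioi 0) := by
    have := hf.deriv_of_isOpen isOpen_Ioi (m := 1) (by norm_num)
    simpa using this
  have hd1 : ∀ x ∈ Ioi 0, HasDerivAt f (deriv f x) x := fun x hx =>
    ((hf.differentiableOn (by norm_num)).differentiableAt
      (isOpen_Ioi.mem_nhds hx)).hasDerivAt
  have hd2 : ∀ x ∈ Ioi 0, HasDerivAt (deriv f) (deriv (deriv f) x) x := fun x hx =>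
    ((hf1.differentiableOn (by norm_num)).differentiableAt
      (isOpen_Ioi.mem_nhds hx)).hasDerivAt
  have hc1 : ContinuousOn (deriv f) (Ioi 0) :=
    (hf1.differentiableOn (by norm_num)).continuousOn
  have hc2 : ContinuousOn (deriv (deriv f)) (Ioi 0) :=
    hf1.continuousOn_deriv_of_isOpen isOpen_Ioi (by norm_num)
  have hiv : IntervalIntegrable (deriv (deriv f)) volume a b :=
    (hc2.mono hsub).intervalIntegrable
  have hiu : IntervalIntegrable (fun _ : ℝ => (1:ℝ)) volume a b :=
    intervalIntegrable_const
  have h := intervalIntegral.integral_mul_deriv_eq_deriv_mul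
    (u := fun x => x - c) (u' := fun _ => (1:ℝ)) (v := deriv f)
    (v' := deriv (deriv f))
    (fun x hx => (hasDerivAt_id x).sub_const c)
    (fun x hx => hd2 x (hsub hx)) hiu hiv
  rw [h]
  have hftc : ∫ x in a..b, deriv f x = f b - f a := by
    apply intervalIntegral.integral_deriv_eq_sub
    · exact fun x hx => ((hf.differentiableOn (by norm_num)).differentiableAt
        (isOpen_Ioi.mem_nhds (hsub hx)))
    · exact (hc1.mono hsub).intervalIntegrable
  have : ∫ x in a..b, (1:ℝ) * deriv f x = f b - f a := by
    simpa using hftc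
  rw [this]; ring

/-- Carr–Madan static replication identity. -/
theorem carr_madan (f : ℝ → ℝ) (hf : ContDiffOn ℝ 2 f (Set.Ioi 0))
    (S₀ ST : ℝ) (hS₀ : 0 < S₀) (hST : 0 < ST) :
    f ST = f S₀ + deriv f S₀ * (ST - S₀)
      + (∫ K in (0:ℝ)..S₀, deriv (deriv f) K * max (K - ST) 0)
      + ∫ K in Set.Ioi S₀, deriv (deriv f) K * max (ST - K) 0 := by
  have hf1 : ContDiffOn ℝ 1 (deriv f) (Ioi 0) := by
    have := hf.deriv_of_isOpen isOpen_Ioi (m := 1) (by norm_num)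
    simpa using this
  have hc2 : ContinuousOn (deriv (deriv f)) (Ioi 0) :=
    hf1.continuousOn_deriv_of_isOpen isOpen_Ioi (by norm_num)
  rcases le_or_gt ST S₀ with hle | hlt
  · -- ST ≤ S₀ : the Ioi integral vanishes
    have h2 : (∫ K in Set.Ioi S₀, deriv (deriv f) K * max (ST - K) 0) = 0 := by
      apply MeasureTheory.setIntegral_eq_zero_of_forall_eq_zero
      intro x hx
      have : ST - x ≤ 0 := by simp only [mem_Ioi] at hx; linarith
      simp [max_eq_right this]
    -- split ∫_0^{S₀} at ST
    have hi1 : IntervalIntegrable (fun K => deriv (deriv f) K * max (K - ST) 0)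
        volume 0 ST := by
      rw [intervalIntegrable_iff]
      apply integrableOn_zero.congr_fun _ measurableSet_Ioc
      intro x hx
      have hx2 : x ≤ 0 ⊔ ST := hx.2
      rw [sup_eq_right.mpr hST.le] at hx2
      have : x - ST ≤ 0 := by linarith
      simp [max_eq_right this]
    have hi2 : IntervalIntegrable (fun K => deriv (deriv f) K * max (K - ST) 0)
        volume ST S₀ := by
      apply ContinuousOn.intervalIntegrable
      apply ContinuousOn.mul
      · exact hc2.mono (fun x hx => lt_of_lt_of_le (lt_min hST hS₀) hx.1)
      · exact ((continuous_id.sub continuous_const).max continuous_const).continuousOn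
    have hsplit : (∫ K in (0:ℝ)..S₀, deriv (deriv f) K * max (K - ST) 0)
        = (∫ K in (0:ℝ)..ST, deriv (deriv f) K * max (K - ST) 0)
          + ∫ K in ST..S₀, deriv (deriv f) K * max (K - ST) 0 :=
      (intervalIntegral.integral_add_adjacent_intervals hi1 hi2).symm
    have hz : (∫ K in (0:ℝ)..ST, deriv (deriv f) K * max (K - ST) 0) = 0 := by
      have hzz : (∫ K in (0:ℝ)..ST, deriv (deriv f) K * max (K - ST) 0)
          = ∫ _ in (0:ℝ)..ST, (0:ℝ) := by
        apply intervalIntegral.integral_congr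
        intro x hx
        rw [uIcc_of_le hST.le] at hx
        have : x - ST ≤ 0 := by linarith [hx.2]
        simp [max_eq_right this]
      simpa using hzz
    have hm : (∫ K in ST..S₀, deriv (deriv f) K * max (K - ST) 0)
        = ∫ K in ST..S₀, (K - ST) * deriv (deriv f) K := by
      apply intervalIntegral.integral_congr
      intro x hx
      rw [uIcc_of_le hle] at hx
      have h : (0:ℝ) ≤ x - ST := by linarith [hx.1]
      simp only [max_eq_left h]; ring
    have hibp := carr_madan_ibp f hf ST S₀ ST hST hS₀
    rw [h2, hsplit, hz, hm, hibp]
    ring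
  · -- S₀ < ST : the interval integral vanishes
    have h1 : (∫ K in (0:ℝ)..S₀, deriv (deriv f) K * max (K - ST) 0) = 0 := by
      have hzz : (∫ K in (0:ℝ)..S₀, deriv (deriv f) K * max (K - ST) 0)
          = ∫ _ in (0:ℝ)..S₀, (0:ℝ) := by
        apply intervalIntegral.integral_congr
        intro x hx
        rw [uIcc_of_le hS₀.le] at hx
        have : x - ST ≤ 0 := by linarith [hx.2]
        simp [max_eq_right this]
      simpa using hzz
    have hEq : Set.Ioi S₀ = Set.Ioc S₀ ST ∪ Set.Ioi ST := (Set.Ioc_union_Ioi_eq_Ioi hlt.le).symm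
    have hiv : IntervalIntegrable (fun K => deriv (deriv f) K * max (ST - K) 0)
        volume S₀ ST := by
      apply ContinuousOn.intervalIntegrable
      apply ContinuousOn.mul
      · exact hc2.mono (fun x hx => lt_of_lt_of_le (lt_min hS₀ hST) hx.1)
      · exact ((continuous_const.sub continuous_id).max continuous_const).continuousOn
    have hia : IntegrableOn (fun K => deriv (deriv f) K * max (ST - K) 0) (Set.Ioc S₀ ST) := by
      exact hiv.1
    have hib : IntegrableOn (fun K => deriv (deriv f) K * max (ST - K) 0) (Set.Ioi ST) := by
      apply integrableOn_zero.congr_fun _ measurableSet_Ioi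
      intro x hx
      have : ST - x ≤ 0 := by simp only [mem_Ioi] at hx; linarith
      simp [max_eq_right this]
    have hunion : (∫ K in Set.Ioi S₀, deriv (deriv f) K * max (ST - K) 0)
        = (∫ K in Set.Ioc S₀ ST, deriv (deriv f) K * max (ST - K) 0)
          + ∫ K in Set.Ioi ST, deriv (deriv f) K * max (ST - K) 0 := by
      rw [hEq]
      exact MeasureTheory.setIntegral_union (Set.Ioc_disjoint_Ioi le_rfl)
        measurableSet_Ioi hia hib
    have hz2 : (∫ K in Set.Ioi ST, deriv (deriv f) K * max (ST - K) 0) = 0 := by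
      apply MeasureTheory.setIntegral_eq_zero_of_forall_eq_zero
      intro x hx
      have : ST - x ≤ 0 := by simp only [mem_Ioi] at hx; linarith
      simp [max_eq_right this]
    have hioc : (∫ K in Set.Ioc S₀ ST, deriv (deriv f) K * max (ST - K) 0)
        = ∫ K in S₀..ST, deriv (deriv f) K * max (ST - K) 0 :=
      (intervalIntegral.integral_of_le hlt.le).symm
    have hm : (∫ K in S₀..ST, deriv (deriv f) K * max (ST - K) 0)
        = - ∫ K in S₀..ST, (K - ST) * deriv (deriv f) K := by
      rw [← intervalIntegral.integral_neg]
      apply intervalIntegral.integral_congr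
      intro x hx
      rw [uIcc_of_le hlt.le] at hx
      have h : (0:ℝ) ≤ ST - x := by linarith [hx.2]
      simp only [max_eq_left h]; ring
    have hibp := carr_madan_ibp f hf S₀ ST ST hS₀ hST
    rw [h1, hunion, hz2, hioc, hm, hibp]
    ring
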